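/- arXiv:2008.11480 — 2 statements merged into one kernel-verified Lean document; each statement's English description precedes it below -/
import Mathlib

section
/- Let A, X be n×n matrices over a ring and set Y = I − XA. Then the following nested factorization of the order-45 Newton–Schulz update holds: { I + (I + (Y⁹)²)(Y⁹ + (Y⁹)²) } · (I + Y³ + Y⁶) · (3I + (XA)(−3I + XA)) · X = (Σ_{j=0}^{44} Y^j) X. Moreover Y³ = I − (Σ_{d=0}^{2} Y^d) X A and Y⁹ = I − (Σ_{d=0}^{8} Y^d) X A. -/
/-!
With `Y = 1 - XA`, every factor is a geometric sum: `3 + XA(-3 + XA) = 1 + Y + Y²`,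
`1 + Y³ + Y⁶ = ∑_{i<3} (Y³)ⁱ` and `1 + (1 + Z²)(Z + Z²) = ∑_{i<5} Zⁱ` for `Z = Y⁹`. Since
`(∑_{i<a} (Yᵇ)ⁱ)(∑_{j<b} Yʲ) = ∑_{k<ab} Yᵏ`, the product telescopes to `∑_{k<5·9} Yᵏ`.
The identities for `Y³` and `Y⁹` are `(∑_{d<n} Yᵈ)(1 - Y) = 1 - Yⁿ`.
-/

open Finset

theorem geom_sum_pow_mul_geom_sum {S : Type*} [Semiring S] (x : S) (a b : ℕ) :
    (∑ i ∈ range a, (x ^ b) ^ i) * ∑ j ∈ range b, x ^ j = ∑ k ∈ range (a * b), x ^ k := by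
  induction a with
  | zero => simp
  | succ a ih =>
    rw [sum_range_succ, add_mul, ih, Nat.succ_mul, sum_range_add, mul_sum]
    simp only [← pow_mul, ← pow_add, mul_comm b a]

section Ring

variable {R : Type*} [Ring R]

theorem one_add_one_add_sq_mul_add_sq_eq_geom_sum (z : R) :
    1 + (1 + z ^ 2) * (z + z ^ 2) = ∑ i ∈ range 5, z ^ i := by
  simp only [sum_range_succ, sum_range_zero]
  noncomm_ring

theorem one_add_pow_three_add_pow_six_eq_geom_sum (y : R) :
    1 + y ^ 3 + y ^ 6 = ∑ i ∈ range 3, (y ^ 3) ^ i := by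
  simp only [sum_range_succ, sum_range_zero, ← pow_mul]
  norm_num

theorem three_add_one_sub_mul_eq_geom_sum (y : R) :
    3 + (1 - y) * (-3 + (1 - y)) = ∑ i ∈ range 3, y ^ i := by
  simp only [sum_range_succ, sum_range_zero]
  rw [show (3 : R) = 1 + 1 + 1 by norm_num]
  noncomm_ring

theorem pow_eq_one_sub_geom_sum_mul_one_sub (y : R) (n : ℕ) :
    y ^ n = 1 - (∑ d ∈ range n, y ^ d) * (1 - y) := by
  rw [geom_sum_mul_neg, sub_sub_cancel]

end Ring

open Finset in
/-- Nested factorization of the order-45 Newton–Schulz update requiring only 10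
matrix-by-matrix multiplications: with `Y = I - XA`,
`{I + (I + (Y⁹)²)(Y⁹ + (Y⁹)²)} (I + Y³ + Y⁶) (3I + (XA)(−3I + XA)) X = (∑_{j<45} Yʲ) X`,
and moreover `Y³ = I − (∑_{d<3} Y^d) X A` and `Y⁹ = I − (∑_{d<9} Y^d) X A`. -/
theorem stmt_8 {m : ℕ} {R : Type*} [Ring R] (A X : Matrix (Fin m) (Fin m) R)
    (Y : Matrix (Fin m) (Fin m) R) (hY : Y = 1 - X * A) :
    (1 + (1 + (Y ^ 9) ^ 2) * (Y ^ 9 + (Y ^ 9) ^ 2)) *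
        ((1 + Y ^ 3 + Y ^ 6) *
          (((3 : Matrix (Fin m) (Fin m) R) + (X * A) * (-(3 : Matrix (Fin m) (Fin m) R) + X * A)) * X)) =
      (∑ j ∈ range 45, Y ^ j) * X ∧
    Y ^ 3 = 1 - (∑ d ∈ range 3, Y ^ d) * X * A ∧
    Y ^ 9 = 1 - (∑ d ∈ range 9, Y ^ d) * X * A := by
  have hXA : X * A = 1 - Y := by rw [hY, sub_sub_cancel]
  refine ⟨?_, ?_, ?_⟩
  · rw [hXA, one_add_one_add_sq_mul_add_sq_eq_geom_sum, one_add_pow_three_add_pow_six_eq_geom_sum,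
      three_add_one_sub_mul_eq_geom_sum, ← mul_assoc, ← mul_assoc,
      mul_assoc (∑ i ∈ range 5, _), geom_sum_pow_mul_geom_sum Y 3 3,
      geom_sum_pow_mul_geom_sum Y 5 (3 * 3)]
  all_goals rw [mul_assoc _ X A, hXA]; exact pow_eq_one_sub_geom_sum_mul_one_sub Y _
end

section
/- Let A be an n×n matrix over a ring, b and θ* vectors with Aθ* = b, and let L_k, G_k, Γ_k, F_k be n×n matrices satisfying Γ_k^n = I − L_k A and F_k = I − G_k A for integers n ≥ 1, q ≥ 1. Define the Richardson update θ_k = θ_{k−1} − [ L_k + Γ_k^n (Σ_{j=0}^{q−1} F_k^j) G_k ] (Aθ_{k−1} − b). Then the parameter estimation error θ̃_k = θ_k − θ* satisfies θ̃_k = Γ_k^n F_k^q θ̃_{k−1}. -/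
/-!
The gain `L + Γⁿ (∑_{j<q} Fʲ) G` and the error propagator `Γⁿ F^q` are linked by the
telescoping identity `(∑_{j<q} Fʲ)(1 - F) = 1 - F^q`: since `G A = 1 - F` and `L A = 1 - Γⁿ`,
`1 - (L + Γⁿ (∑_{j<q} Fʲ) G) A = Γⁿ - Γⁿ (1 - F^q) = Γⁿ F^q`. Any update
`θ_k = θ_{k-1} - K (A θ_{k-1} - b)` has error propagator `1 - K A` because `A θ* = b`.
-/

open scoped Matrix

theorem one_sub_add_mul_geom_sum_mul_mul {R : Type*} [Ring R] {A L G P F : R} (q : ℕ)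
    (hP : P = 1 - L * A) (hF : F = 1 - G * A) :
    1 - (L + P * ((∑ j ∈ Finset.range q, F ^ j) * G)) * A = P * F ^ q := by
  have hGA : G * A = 1 - F := by rw [hF, sub_sub_cancel]
  have hLA : L * A = 1 - P := by rw [hP, sub_sub_cancel]
  rw [add_mul, mul_assoc P, mul_assoc, hGA, geom_sum_mul_neg, hLA, mul_sub, mul_one]
  abel

theorem Matrix.sub_mulVec_sub_eq_one_sub_mul_mulVec {ι R : Type*} [Fintype ι] [DecidableEq ι]
    [Ring R] {A K : Matrix ι ι R} {b θstar θprev : ι → R} (hsol : A *ᵥ θstar = b) :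
    θprev - K *ᵥ (A *ᵥ θprev - b) - θstar = (1 - K * A) *ᵥ (θprev - θstar) := by
  rw [← hsol, ← Matrix.mulVec_sub, Matrix.mulVec_mulVec, Matrix.sub_mulVec, Matrix.one_mulVec]
  abel

open Finset in
theorem stmt_16_general {m : ℕ} {R : Type*} [CommRing R] (A : Matrix (Fin m) (Fin m) R)
    (b θstar : Fin m → R) (hsol : A.mulVec θstar = b)
    (n q : ℕ)
    (Lk Gk Γk Fk : Matrix (Fin m) (Fin m) R)
    (hL : Γk ^ n = 1 - Lk * A) (hF : Fk = 1 - Gk * A)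
    (θprev θk : Fin m → R)
    (hθ : θk = θprev -
      (Lk + Γk ^ n * ((∑ j ∈ range q, Fk ^ j) * Gk)).mulVec (A.mulVec θprev - b)) :
    θk - θstar = (Γk ^ n * Fk ^ q).mulVec (θprev - θstar) := by
  rw [hθ, Matrix.sub_mulVec_sub_eq_one_sub_mul_mulVec hsol,
    one_sub_add_mul_geom_sum_mul_mul q hL hF]

open Finset in
/-- Error model of the Richardson iteration with high-order convergence
accelerator: if `Aθ* = b`, `Γ_kⁿ = I - L_k A`, `F_k = I - G_k A`, and
`θ_k = θ_{k-1} - [L_k + Γ_kⁿ (∑_{j<q} F_kʲ) G_k](Aθ_{k-1} - b)`, then the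
parameter error `θ̃_k = θ_k - θ*` satisfies `θ̃_k = Γ_kⁿ F_k^q θ̃_{k-1}`. -/
theorem stmt_16 {m : ℕ} {R : Type*} [CommRing R] (A : Matrix (Fin m) (Fin m) R)
    (b θstar : Fin m → R) (hsol : A.mulVec θstar = b)
    (n q : ℕ) (hn : 1 ≤ n) (hq : 1 ≤ q)
    (Lk Gk Γk Fk : Matrix (Fin m) (Fin m) R)
    (hL : Γk ^ n = 1 - Lk * A) (hF : Fk = 1 - Gk * A)
    (θprev θk : Fin m → R)
    (hθ : θk = θprev -
      (Lk + Γk ^ n * ((∑ j ∈ range q, Fk ^ j) * Gk)).mulVec (A.mulVec θprev - b)) :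
    θk - θstar = (Γk ^ n * Fk ^ q).mulVec (θprev - θstar) :=
  stmt_16_general A b θstar hsol n q Lk Gk Γk Fk hL hF θprev θk hθ
end
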